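/- Let N ≥ 1, let G be a closed subgroup of U_N with Haar probability measure μ, let k ≥ 1, and let e = (e_1,…,e_k) be a word with letters in {∘,•}. Let Fix_e(G) = {ξ : {1,…,N}^k → ℂ : g^{⊗e} ξ = ξ for all g ∈ G}, let (ξ_π)_{π∈D} be a finite basis of Fix_e(G), and let G_{kN} be the Gram matrix G_{kN}(π,σ) = ⟨ξ_π, ξ_σ⟩ = Σ_{j∈{1,…,N}^k} conj(ξ_π(j)) ξ_σ(j). Then G_{kN} is invertible, and with W_{kN} = G_{kN}^{-1}, for all multi-indices i, j ∈ {1,…,N}^k one has ∫_G ∏_{a=1}^k g_{i_a j_a}^{e_a} dμ(g) = Σ_{π,σ∈D} ξ_π(i) conj(ξ_σ(j)) W_{kN}(π,σ). -/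

import Mathlib

open Matrix MeasureTheory

/-- `x^∘ = x` and `x^• = conj x`, for a scalar `x` (here `true` encodes `•`). -/
noncomputable def dec (b : Bool) (z : ℂ) : ℂ := if b then (starRingEnd ℂ) z else z

/-- The decorated tensor power `g^{⊗e}` of a matrix `g ∈ M_N(ℂ)`, for a word `e` with letters
in `{∘,•}` (here `true` encodes `•`): the matrix with entries `∏_a g_{i_a j_a}^{e_a}`. -/
noncomputable def decPow {N k : ℕ} (e : Fin k → Bool) (g : Matrix (Fin N) (Fin N) ℂ) :
    Matrix (Fin k → Fin N) (Fin k → Fin N) ℂ :=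
  Matrix.of fun i j => ∏ a, dec (e a) (g (i a) (j a))

/-- The space `Fix_e(G)` of vectors `ξ : {1,…,N}^k → ℂ` with `g^{⊗e} ξ = ξ` for all `g ∈ G`. -/
noncomputable def FixE {N k : ℕ} (G : Subgroup (Matrix.unitaryGroup (Fin N) ℂ))
    (e : Fin k → Bool) : Submodule ℂ ((Fin k → Fin N) → ℂ) where
  carrier := {ξ | ∀ g ∈ G, decPow e (g : Matrix (Fin N) (Fin N) ℂ) *ᵥ ξ = ξ}
  add_mem' := by
    intro a b ha hb g hg
    rw [Matrix.mulVec_add, ha g hg, hb g hg]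
  zero_mem' := by
    intro g hg
    rw [Matrix.mulVec_zero]
  smul_mem' := by
    intro c a ha g hg
    rw [Matrix.mulVec_smul, ha g hg]

/-- We equip a closed subgroup `G ⊆ U_N` with its Borel σ-algebra. -/
noncomputable instance instMeasSubgroupUG {N : ℕ} (G : Subgroup (Matrix.unitaryGroup (Fin N) ℂ)) :
    MeasurableSpace G := borel G

instance instBorelSubgroupUG {N : ℕ} (G : Subgroup (Matrix.unitaryGroup (Fin N) ℂ)) :
    BorelSpace G := ⟨rfl⟩

/-! The average `P = ∫ g^{⊗e} dμ` is the orthogonal projection onto `Fix_e(G)`. Left invariance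
of `μ` gives `g^{⊗e} P = P`, so the columns of `P` lie in `Fix_e(G)`; since `g^{⊗e}` is unitary
with inverse `(g⁻¹)^{⊗e}`, every `ξ ∈ Fix_e(G)` satisfies `ξ* P = ξ*`. With `X` the matrix whose
columns are the `ξ_π`, the first fact reads `P = X C` and the second `X* X C = X*`. The Gram
matrix `X* X` is positive definite because the columns of `X` are independent, hence
`P = X (X* X)⁻¹ X*`, which is the Weingarten formula entrywise. -/

lemma dec_mul (b : Bool) (x y : ℂ) : dec b (x * y) = dec b x * dec b y := by
  cases b <;> simp [dec]

lemma dec_sum {ι : Type*} (b : Bool) (s : Finset ι) (f : ι → ℂ) :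
    dec b (∑ i ∈ s, f i) = ∑ i ∈ s, dec b (f i) := by
  cases b <;> simp [dec]

lemma dec_conj (b : Bool) (z : ℂ) : dec b (starRingEnd ℂ z) = starRingEnd ℂ (dec b z) := by
  cases b <;> simp [dec]

lemma norm_dec (b : Bool) (z : ℂ) : ‖dec b z‖ = ‖z‖ := by
  cases b <;> simp [dec]

lemma continuous_dec (b : Bool) : Continuous (dec b) := by
  cases b
  · exact continuous_id
  · exact Complex.continuous_conj

section DecPow

variable {N k : ℕ} (e : Fin k → Bool)

lemma decPow_one : decPow e (1 : Matrix (Fin N) (Fin N) ℂ) = 1 := by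
  ext i j
  by_cases hij : i = j
  · subst hij
    simp [decPow, dec]
  · obtain ⟨a, ha⟩ := Function.ne_iff.mp hij
    rw [one_apply_ne hij, decPow, of_apply]
    exact Finset.prod_eq_zero (Finset.mem_univ a) (by simp [dec, one_apply_ne ha])

lemma decPow_mul (g h : Matrix (Fin N) (Fin N) ℂ) :
    decPow e (g * h) = decPow e g * decPow e h := by
  ext i j
  simp only [decPow, of_apply, mul_apply, dec_sum, dec_mul]
  rw [Finset.prod_univ_sum]
  simp only [Fintype.piFinset_univ, Finset.prod_mul_distrib]

lemma decPow_conjTranspose (g : Matrix (Fin N) (Fin N) ℂ) :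
    decPow e gᴴ = (decPow e g)ᴴ := by
  ext i j
  simp [decPow, dec_conj]

noncomputable def decPowHom :
    Matrix (Fin N) (Fin N) ℂ →* Matrix (Fin k → Fin N) (Fin k → Fin N) ℂ where
  toFun := decPow e
  map_one' := decPow_one e
  map_mul' := decPow_mul e

lemma norm_decPow_apply_le_one {g : Matrix (Fin N) (Fin N) ℂ} (hg : g ∈ unitaryGroup (Fin N) ℂ)
    (i j : Fin k → Fin N) : ‖decPow e g i j‖ ≤ 1 := by
  simp only [decPow, of_apply, norm_prod, norm_dec]
  exact Finset.prod_le_one (fun _ _ => norm_nonneg _) fun a _ => entry_norm_bound_of_unitary hg _ _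

lemma continuous_decPow_apply (i j : Fin k → Fin N) :
    Continuous fun g : Matrix (Fin N) (Fin N) ℂ => decPow e g i j := by
  simp only [decPow, of_apply]
  exact continuous_finsetProd _ fun a _ => (continuous_dec (e a)).comp (continuous_apply_apply _ _)

end DecPow

section EntrywiseIntegral

variable {Γ : Type*} [MeasurableSpace Γ] (μ : Measure Γ) {l m n : Type*}

noncomputable def entrywiseIntegral (f : Γ → Matrix m n ℂ) : Matrix m n ℂ :=
  Matrix.of fun i j => ∫ g, f g i j ∂μ

lemma mul_entrywiseIntegral [Fintype m] (A : Matrix l m ℂ) {f : Γ → Matrix m n ℂ}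
    (hf : ∀ i j, Integrable (fun g => f g i j) μ) :
    A * entrywiseIntegral μ f = entrywiseIntegral μ fun g => A * f g := by
  ext i j
  simp only [entrywiseIntegral, mul_apply, of_apply]
  rw [integral_finsetSum _ fun k _ => (hf k j).const_mul _]
  simp only [integral_const_mul]

lemma entrywiseIntegral_const [IsProbabilityMeasure μ] (A : Matrix m n ℂ) :
    entrywiseIntegral μ (fun _ => A) = A := by
  ext i j
  simp [entrywiseIntegral]

lemma conjTranspose_mul_entrywiseIntegral_eq_self [Fintype m] [IsProbabilityMeasure μ]
    {f : Γ → Matrix m m ℂ} (hf : ∀ i j, Integrable (fun g => f g i j) μ) {X : Matrix m n ℂ}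
    (hX : ∀ g, (f g)ᴴ * X = X) : Xᴴ * entrywiseIntegral μ f = Xᴴ := by
  have hX' : ∀ g, Xᴴ * f g = Xᴴ := fun g => by
    simpa using congrArg conjTranspose (hX g)
  rw [mul_entrywiseIntegral μ _ hf]
  simp only [hX']
  exact entrywiseIntegral_const μ _

lemma mul_entrywiseIntegral_eq_self [Group Γ] [MeasurableMul Γ]
    [μ.IsMulLeftInvariant] [Fintype m] [DecidableEq m] {ρ : Γ →* Matrix m m ℂ}
    (hρ : ∀ i j, Integrable (fun g => ρ g i j) μ) (g : Γ) :
    ρ g * entrywiseIntegral μ ρ = entrywiseIntegral μ ρ := by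
  rw [mul_entrywiseIntegral μ _ hρ]
  ext i j
  simpa [entrywiseIntegral] using integral_mul_left_eq_self (fun h => ρ h i j) g

end EntrywiseIntegral

section GramMatrix

variable {n D : Type*}

open scoped ComplexOrder in
lemma isUnit_conjTranspose_mul_self [Fintype n] [Fintype D] [DecidableEq D] {X : Matrix n D ℂ}
    (hX : LinearIndependent ℂ X.col) :
    IsUnit (Xᴴ * X) :=
  (PosDef.conjTranspose_mul_self X (mulVec_injective_iff.mpr hX)).isUnit

lemma Matrix.col_mul {l α : Type*} [Fintype n] [NonUnitalNonAssocSemiring α] (A : Matrix l n α)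
    (B : Matrix n D α) (j : D) :
    (A * B).col j = A *ᵥ B.col j := rfl

lemma eq_mul_inv_mul_conjTranspose [Fintype n] [Fintype D] [DecidableEq D] {X : Matrix n D ℂ}
    {P : Matrix n n ℂ} (hX : LinearIndependent ℂ X.col)
    (hcol : ∀ j, P.col j ∈ Submodule.span ℂ (Set.range X.col)) (hrow : Xᴴ * P = Xᴴ) : P = X * (Xᴴ * X)⁻¹ * Xᴴ := by
  have hcol' : ∀ j, ∃ c, X *ᵥ c = P.col j := fun j => by
    simpa [← range_mulVecLin] using hcol j
  choose c hc using hcol'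
  set C : Matrix D n ℂ := (Matrix.of c)ᵀ
  have hPC : P = X * C := ext_col fun j => (hc j).symm
  have hdet : IsUnit (Xᴴ * X).det :=
    (isUnit_iff_isUnit_det _).mp (isUnit_conjTranspose_mul_self hX)
  calc P = X * ((Xᴴ * X)⁻¹ * (Xᴴ * X * C)) := by rw [nonsing_inv_mul_cancel_left _ _ hdet, hPC]
    _ = X * (Xᴴ * X)⁻¹ * Xᴴ := by rw [Matrix.mul_assoc, ← hPC, hrow, Matrix.mul_assoc]

lemma mul_mul_conjTranspose_apply [Fintype D] (X : Matrix n D ℂ) (W : Matrix D D ℂ) (i j : n) :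
    (X * W * Xᴴ) i j = ∑ π, ∑ σ, X i π * starRingEnd ℂ (X j σ) * W π σ := by
  simp only [mul_apply, conjTranspose_apply, Finset.sum_mul, RCLike.star_def]
  rw [Finset.sum_comm]
  refine Finset.sum_congr rfl fun π _ => Finset.sum_congr rfl fun σ _ => by ring

end GramMatrix

lemma integrable_decPow_apply {N k : ℕ} (e : Fin k → Bool) {G : Subgroup (unitaryGroup (Fin N) ℂ)}
    (μ : Measure G) [IsFiniteMeasure μ] (i j : Fin k → Fin N) :
    Integrable (fun g : G => decPow e ((g : unitaryGroup (Fin N) ℂ) : Matrix (Fin N) (Fin N) ℂ) i j)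
      μ :=
  .of_bound ((continuous_decPow_apply e i j).comp
      (continuous_subtype_val.comp continuous_subtype_val)).aestronglyMeasurable 1
    (.of_forall fun g => norm_decPow_apply_le_one e g.1.2 i j)

theorem stmt4_general (N : ℕ) (G : Subgroup (Matrix.unitaryGroup (Fin N) ℂ))
    (μ : Measure G) [IsProbabilityMeasure μ]
    [μ.IsMulLeftInvariant]
    (k : ℕ) (e : Fin k → Bool)
    (D : Type*) [Fintype D] [DecidableEq D]
    (ξ : D → ((Fin k → Fin N) → ℂ))
    (hmem : ∀ π, ξ π ∈ FixE G e)
    (hind : LinearIndependent ℂ ξ)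
    (hspan : Submodule.span ℂ (Set.range ξ) = FixE G e)
    (Gm : Matrix D D ℂ)
    (hGm : ∀ π σ, Gm π σ = ∑ j : Fin k → Fin N, (starRingEnd ℂ) (ξ π j) * ξ σ j) :
    IsUnit Gm ∧
    ∀ i j : Fin k → Fin N,
      (∫ g : G, ∏ a, dec (e a)
          (((g : Matrix.unitaryGroup (Fin N) ℂ) : Matrix (Fin N) (Fin N) ℂ) (i a) (j a)) ∂μ) =
        ∑ π : D, ∑ σ : D, ξ π i * (starRingEnd ℂ) (ξ σ j) * Gm⁻¹ π σ := by
  set X : Matrix (Fin k → Fin N) D ℂ := (Matrix.of ξ)ᵀ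
  have hGram : Gm = Xᴴ * X := by
    ext π σ
    simp [hGm, X, mul_apply]
  let ρ : G →* Matrix (Fin k → Fin N) (Fin k → Fin N) ℂ :=
    (decPowHom e).comp ((unitary _).subtype.comp G.subtype)
  have hρ : ∀ i j, Integrable (fun g => ρ g i j) μ := integrable_decPow_apply e μ
  set P := entrywiseIntegral μ ρ
  have hcol : ∀ j, P.col j ∈ Submodule.span ℂ (Set.range X.col) := by
    intro j
    rw [of_col, hspan]
    intro g hg
    rw [← col_mul]
    exact congrArg (col · j) (mul_entrywiseIntegral_eq_self μ hρ ⟨g, hg⟩)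
  have hrow : Xᴴ * P = Xᴴ := by
    refine conjTranspose_mul_entrywiseIntegral_eq_self μ hρ fun g => ext_col fun π => ?_
    have hfix := hmem π _ (G.inv_mem g.2)
    rwa [UnitaryGroup.inv_val, star_eq_conjTranspose, decPow_conjTranspose] at hfix
  have hP := eq_mul_inv_mul_conjTranspose (X := X) hind hcol hrow
  refine ⟨hGram ▸ isUnit_conjTranspose_mul_self (X := X) hind, fun i j => ?_⟩
  change P i j = _
  rw [hP, mul_mul_conjTranspose_apply, hGram]
  rfl

/-- The Weingarten integration formula for a closed subgroup `G ⊆ U_N` with Haar probability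
measure `μ`: given a basis `(ξ_π)_{π ∈ D}` of `Fix_e(G)`, the Gram matrix
`G_{kN}(π,σ) = ⟨ξ_π, ξ_σ⟩` is invertible, and with `W_{kN} = G_{kN}⁻¹`,
`∫_G ∏_a g_{i_a j_a}^{e_a} dμ = Σ_{π,σ} ξ_π(i) conj(ξ_σ(j)) W_{kN}(π,σ)`. -/
theorem stmt4 (N : ℕ) (hN : 1 ≤ N) (G : Subgroup (Matrix.unitaryGroup (Fin N) ℂ))
    (hG : IsClosed (G : Set (Matrix.unitaryGroup (Fin N) ℂ)))
    (μ : Measure G) [IsProbabilityMeasure μ]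
    [μ.IsMulLeftInvariant] [μ.IsMulRightInvariant]
    (k : ℕ) (hk : 1 ≤ k) (e : Fin k → Bool)
    (D : Type*) [Fintype D] [DecidableEq D]
    (ξ : D → ((Fin k → Fin N) → ℂ))
    (hmem : ∀ π, ξ π ∈ FixE G e)
    (hind : LinearIndependent ℂ ξ)
    (hspan : Submodule.span ℂ (Set.range ξ) = FixE G e)
    (Gm : Matrix D D ℂ)
    (hGm : ∀ π σ, Gm π σ = ∑ j : Fin k → Fin N, (starRingEnd ℂ) (ξ π j) * ξ σ j) :
    IsUnit Gm ∧
    ∀ i j : Fin k → Fin N,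
      (∫ g : G, ∏ a, dec (e a)
          (((g : Matrix.unitaryGroup (Fin N) ℂ) : Matrix (Fin N) (Fin N) ℂ) (i a) (j a)) ∂μ) =
        ∑ π : D, ∑ σ : D, ξ π i * (starRingEnd ℂ) (ξ σ j) * Gm⁻¹ π σ :=
  stmt4_general N G μ k e D ξ hmem hind hspan Gm hGm
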